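/- arXiv:2303.16995 — 2 statements merged into one kernel-verified Lean document; each statement's English description precedes it below -/
import Mathlib

section
/- Suppose that for every coloring of the pairs of [N] with n-2 colors (taken from a linearly ordered set of n-2 colors) there is a non-increasing set of size s. Then for every red/blue coloring of the triples of [N] there is either a red clique on s vertices or a blue tight monotone path on n vertices. In other words, r_3(K_s, P_n) ≤ f(s; n-2). -/
/-! A pair `(u, v)` is colored by the number of vertices, minus two, of the longest blue tight
path ending in `u, v`, capped at `n - 3`. A blue triple `u < v < w` extends every such path
ending in `u, v` by `w`, so without a blue path on `n` vertices the color strictly increases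
from `(u, v)` to `(v, w)`. A non-increasing set therefore contains no blue triple. -/

/-- A triple `u < v < w` is non-increasing with respect to `χ` (with linearly ordered
colors) if `χ(u,v) = χ(u,w) ≥ χ(v,w)` or `χ(u,v) ≥ χ(v,w) = χ(u,w)`. -/
def NonIncTriple {α : Type*} [LinearOrder α] (χ : ℕ → ℕ → α) (u v w : ℕ) : Prop :=
  (χ u v = χ u w ∧ χ v w ≤ χ u w) ∨ (χ v w = χ u w ∧ χ v w ≤ χ u v)

def IsBluePath (φ : ℕ → ℕ → ℕ → Bool) (N m : ℕ) (p : ℕ → ℕ) : Prop :=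
  (∀ i < m, p i ∈ Finset.Icc 1 N) ∧ (∀ i j, i < j → j < m → p i < p j) ∧
    ∀ i, i + 2 < m → φ (p i) (p (i + 1)) (p (i + 2)) = false

/-- There is a blue tight path on `k + 2` vertices whose last two vertices are `u, v`. -/
def HasBluePathTo (φ : ℕ → ℕ → ℕ → Bool) (N u v k : ℕ) : Prop :=
  ∃ p, IsBluePath φ N (k + 2) p ∧ p k = u ∧ p (k + 1) = v

section BluePath

variable {φ : ℕ → ℕ → ℕ → Bool} {N u v w k : ℕ}

lemma hasBluePathTo_zero (hu : u ∈ Finset.Icc 1 N) (hv : v ∈ Finset.Icc 1 N) (huv : u < v) :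
    HasBluePathTo φ N u v 0 := by
  refine ⟨fun i => if i = 0 then u else v, ⟨fun i _ => ?_, fun i j hij hj => ?_, ?_⟩, rfl, rfl⟩
  · dsimp only
    split_ifs <;> assumption
  · obtain rfl : i = 0 := by omega
    simpa [show j ≠ 0 by omega] using huv
  · intro i hi; omega

lemma HasBluePathTo.extend (h : HasBluePathTo φ N u v k) (hvw : v < w)
    (hw : w ∈ Finset.Icc 1 N) (hblue : φ u v w = false) : HasBluePathTo φ N v w (k + 1) := by
  obtain ⟨p, ⟨hmem, hmono, htight⟩, rfl, rfl⟩ := h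
  have hlt : ∀ i < k + 2, p i < w := fun i hi => by
    rcases Nat.lt_or_ge i (k + 1) with h | h
    · exact (hmono i (k + 1) h (by omega)).trans hvw
    · rwa [show i = k + 1 by omega]
  refine ⟨Function.update p (k + 2) w, ⟨fun i hi => ?_, fun i j hij hj => ?_, fun i hi => ?_⟩,
    by simp, by simp⟩
  · rcases eq_or_ne i (k + 2) with rfl | hne
    · simpa using hw
    · simpa [hne] using hmem i (by omega)
  · rcases eq_or_ne j (k + 2) with rfl | hne
    · simpa [show i ≠ k + 2 by omega] using hlt i hij
    · simpa [hne, show i ≠ k + 2 by omega] using hmono i j hij (by omega)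
  · rcases eq_or_ne (i + 2) (k + 2) with hi2 | hne
    · obtain rfl : i = k := by omega
      simpa using hblue
    · rw [Function.update_of_ne (by omega), Function.update_of_ne (by omega),
        Function.update_of_ne hne]
      exact htight i (by omega)

end BluePath

open Classical in
noncomputable def pathColor (φ : ℕ → ℕ → ℕ → Bool) (N b u v : ℕ) : ℕ :=
  Nat.findGreatest (HasBluePathTo φ N u v) b

open Classical in
lemma pathColor_le (φ : ℕ → ℕ → ℕ → Bool) (N b u v : ℕ) : pathColor φ N b u v ≤ b :=
  Nat.findGreatest_le b

open Classical in
lemma pathColor_lt_of_blue {φ : ℕ → ℕ → ℕ → Bool} {N b u v w : ℕ}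
    (hlong : ¬∃ p, IsBluePath φ N (b + 3) p) (hu : u ∈ Finset.Icc 1 N)
    (hv : v ∈ Finset.Icc 1 N) (hw : w ∈ Finset.Icc 1 N) (huv : u < v) (hvw : v < w)
    (hblue : φ u v w = false) : pathColor φ N b u v < pathColor φ N b v w := by
  set k := pathColor φ N b u v
  have hk : HasBluePathTo φ N u v k :=
    Nat.findGreatest_spec (P := HasBluePathTo φ N u v) (Nat.zero_le b)
      (hasBluePathTo_zero hu hv huv)
  have hext : HasBluePathTo φ N v w (k + 1) := hk.extend hvw hw hblue
  have hkb : k + 1 ≤ b := by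
    by_contra! hbk
    have hk_eq : k = b := le_antisymm (pathColor_le φ N b u v) (by omega)
    obtain ⟨p, hp, -⟩ := hk_eq ▸ hext
    exact hlong ⟨p, hp⟩
  exact Nat.le_findGreatest hkb hext

lemma NonIncTriple.right_le_left {α : Type*} [LinearOrder α] {χ : ℕ → ℕ → α} {u v w : ℕ}
    (h : NonIncTriple χ u v w) : χ v w ≤ χ u v := by
  rcases h with ⟨huv, hvw⟩ | ⟨-, hvw⟩
  · exact huv ▸ hvw
  · exact hvw

/-- `r_3(K_s, P_n) ≤ f(s; n-2)`: if every coloring of the pairs of `[N]` with `n - 2`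
linearly ordered colors admits a non-increasing set of size `s`, then every red/blue
coloring `φ` of the triples of `[N]` (`true` = red, `false` = blue) contains a red
clique on `s` vertices or a blue tight monotone path on `n` vertices. -/
theorem ramsey_le_noninc (s n N : ℕ) (hn : 3 ≤ n)
    (hf : ∀ χ : ℕ → ℕ → Fin (n - 2),
      ∃ S : Finset ℕ, S ⊆ Finset.Icc 1 N ∧ S.card = s ∧
        ∀ u ∈ S, ∀ v ∈ S, ∀ w ∈ S, u < v → v < w → NonIncTriple χ u v w)
    (φ : ℕ → ℕ → ℕ → Bool) :
    (∃ S : Finset ℕ, S ⊆ Finset.Icc 1 N ∧ S.card = s ∧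
      ∀ u ∈ S, ∀ v ∈ S, ∀ w ∈ S, u < v → v < w → φ u v w = true) ∨
    (∃ v : ℕ → ℕ, (∀ i < n, v i ∈ Finset.Icc 1 N) ∧
      (∀ i j, i < j → j < n → v i < v j) ∧
      ∀ i, i + 2 < n → φ (v i) (v (i + 1)) (v (i + 2)) = false) := by
  by_cases hlong : ∃ p, IsBluePath φ N n p
  · exact Or.inr hlong
  left
  rw [← Nat.sub_add_cancel hn] at hlong
  let χ : ℕ → ℕ → Fin (n - 2) :=
    fun u v => ⟨pathColor φ N (n - 3) u v, by have := pathColor_le φ N (n - 3) u v; omega⟩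
  obtain ⟨S, hSN, hcard, hS⟩ := hf χ
  refine ⟨S, hSN, hcard, fun u hu v hv w hw huv hvw => ?_⟩
  by_contra hred
  have hlt := pathColor_lt_of_blue hlong (hSN hu) (hSN hv) (hSN hw) huv hvw
    (Bool.not_eq_true _ ▸ hred)
  exact (hS u hu v hv w hw huv hvw).right_le_left.not_gt hlt
end

section
/- If every q-coloring of the pairs of any set of size f contains a non-increasing set of size s-1, then in any q-coloring of the pairs of [N] with N ≥ f + (s-1), the number of non-increasing (s-1)-element subsets is at least C(N, f) / C(N - (s-1), f - (s-1)) ≥ (N - s)^{s-1} / f^{s-1}. -/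
private lemma pow_le_descFactorial_aux : ∀ (k n : ℕ), (n - k) ^ k ≤ n.descFactorial k
  | 0, _ => le_refl 1
  | (k+1), n => by
    rw [Nat.descFactorial_succ, pow_succ']
    exact Nat.mul_le_mul (Nat.sub_le_sub_left k.le_succ n)
      (le_trans (Nat.pow_le_pow_left (Nat.sub_le_sub_left k.le_succ n) k)
        (pow_le_descFactorial_aux k n))

open scoped Classical in
/-- Supersaturation: if every `q`-coloring of the pairs of any set of size `f`
contains a non-increasing set of size `s - 1`, then for `N ≥ f + (s-1)` and any
`q`-coloring `χ` of the pairs of `[N]`, the number of non-increasing `(s-1)`-subsets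
of `[N]` is at least `C(N, f) / C(N - (s-1), f - (s-1)) ≥ (N - s)^{s-1} / f^{s-1}`. -/
theorem supersaturation (q s f N : ℕ) (hs : 2 ≤ s) (hN : f + (s - 1) ≤ N)
    (hf : ∀ (A : Finset ℕ) (χ' : ℕ → ℕ → Fin q), A.card = f →
      ∃ B ⊆ A, B.card = s - 1 ∧
        ∀ u ∈ B, ∀ v ∈ B, ∀ w ∈ B, u < v → v < w → NonIncTriple χ' u v w)
    (χ : ℕ → ℕ → Fin q) :
    ((N.choose f : ℝ) / ((N - (s - 1)).choose (f - (s - 1)) : ℝ) ≤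
      ((((Finset.Icc 1 N).powersetCard (s - 1)).filter
        (fun B => ∀ u ∈ B, ∀ v ∈ B, ∀ w ∈ B, u < v → v < w →
          NonIncTriple χ u v w)).card : ℝ)) ∧
    ((N : ℝ) - s) ^ (s - 1) / (f : ℝ) ^ (s - 1) ≤
      (N.choose f : ℝ) / ((N - (s - 1)).choose (f - (s - 1)) : ℝ) := by
  set k := s - 1 with hk
  -- k ≤ f
  obtain ⟨B0, hB0sub, hB0card, -⟩ := hf (Finset.range f) χ (Finset.card_range f)
  have hkf : k ≤ f := by
    have := Finset.card_le_card hB0sub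
    rw [hB0card, Finset.card_range] at this
    exact this
  have hfN : f ≤ N := le_trans (Nat.le_add_right f k) hN
  have hkN : k ≤ N := le_trans (Nat.le_add_left k f) hN
  have hfkNk : f - k ≤ N - k := Nat.sub_le_sub_right hfN k
  have hc2pos : 0 < (N - k).choose (f - k) := Nat.choose_pos hfkNk
  set T := (((Finset.Icc 1 N).powersetCard k).filter
    (fun B => ∀ u ∈ B, ∀ v ∈ B, ∀ w ∈ B, u < v → v < w → NonIncTriple χ u v w)) with hT
  -- Main counting inequality
  have key : N.choose f ≤ T.card * (N - k).choose (f - k) := by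
    set S := (Finset.Icc 1 N).powersetCard f with hS
    have hScard : S.card = N.choose f := by
      rw [hS, Finset.card_powersetCard, Nat.card_Icc]; simp
    have hchoice : ∀ A : Finset ℕ, A.card = f → ∃ B, B ⊆ A ∧ B.card = k ∧
        ∀ u ∈ B, ∀ v ∈ B, ∀ w ∈ B, u < v → v < w → NonIncTriple χ u v w := by
      intro A hA
      obtain ⟨B, h1, h2, h3⟩ := hf A χ hA
      exact ⟨B, h1, h2, h3⟩
    set g : Finset ℕ → Finset ℕ := fun A =>
      if h : A.card = f then (hchoice A h).choose else ∅ with hg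
    have hgspec : ∀ A : Finset ℕ, A.card = f → g A ⊆ A ∧ (g A).card = k ∧
        ∀ u ∈ g A, ∀ v ∈ g A, ∀ w ∈ g A, u < v → v < w → NonIncTriple χ u v w := by
      intro A hA
      simp only [hg, dif_pos hA]
      exact (hchoice A hA).choose_spec
    have hmaps : ∀ A ∈ S, g A ∈ T := by
      intro A hA
      rw [hS, Finset.mem_powersetCard] at hA
      obtain ⟨hsub, hcard, hgood⟩ := hgspec A hA.2
      simp only [hT, Finset.mem_filter, Finset.mem_powersetCard]
      exact ⟨⟨hsub.trans hA.1, hcard⟩, hgood⟩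
    have hfiber := Finset.card_eq_sum_card_fiberwise hmaps
    have hbound : ∀ B ∈ T, (S.filter fun A => g A = B).card ≤ (N - k).choose (f - k) := by
      intro B hB
      simp only [hT, Finset.mem_filter, Finset.mem_powersetCard] at hB
      obtain ⟨⟨hBsub, hBcard⟩, -⟩ := hB
      have : (S.filter fun A => g A = B).card ≤
          (((Finset.Icc 1 N) \ B).powersetCard (f - k)).card := by
        apply Finset.card_le_card_of_injOn (fun A => A \ B)
        · intro A hA
          simp only [Finset.mem_coe, Finset.mem_filter] at hA
          obtain ⟨hAS, hgA⟩ := hA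
          rw [hS, Finset.mem_powersetCard] at hAS
          have hBA : B ⊆ A := hgA ▸ (hgspec A hAS.2).1
          show A \ B ∈ ((Finset.Icc 1 N \ B).powersetCard (f - k))
          rw [Finset.mem_powersetCard]
          constructor
          · exact Finset.sdiff_subset_sdiff hAS.1 le_rfl
          · rw [Finset.card_sdiff_of_subset hBA, hAS.2, hBcard]
        · intro A1 h1 A2 h2 heq
          simp only [Finset.mem_coe, Finset.mem_filter] at h1 h2
          have hB1 : B ⊆ A1 := h1.2 ▸ (hgspec A1 (by
            rw [hS, Finset.mem_powersetCard] at h1; exact h1.1.2)).1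
          have hB2 : B ⊆ A2 := h2.2 ▸ (hgspec A2 (by
            rw [hS, Finset.mem_powersetCard] at h2; exact h2.1.2)).1
          have heq' : A1 \ B = A2 \ B := heq
          have : A1 \ B ∪ B = A2 \ B ∪ B := by rw [heq']
          rwa [Finset.sdiff_union_of_subset hB1, Finset.sdiff_union_of_subset hB2] at this
      refine this.trans ?_
      rw [Finset.card_powersetCard, Finset.card_sdiff_of_subset hBsub, Nat.card_Icc, hBcard]
      simp
    calc N.choose f = S.card := hScard.symm
      _ = ∑ B ∈ T, (S.filter fun A => g A = B).card := hfiber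
      _ ≤ T.card * (N - k).choose (f - k) := by
          have := Finset.sum_le_card_nsmul T _ _ hbound
          simpa [smul_eq_mul] using this
  have hc2posR : (0:ℝ) < ((N - k).choose (f - k) : ℝ) := by exact_mod_cast hc2pos
  constructor
  · rw [div_le_iff₀ hc2posR]
    exact_mod_cast key
  · -- second inequality
    have hsN : s ≤ N := by
      have : s ≤ f + (s - 1) := by omega
      exact this.trans hN
    have hfpos : 0 < f := lt_of_lt_of_le (by omega) hkf
    have hc4pos : 0 < f.choose k := Nat.choose_pos hkf
    have hident : N.choose f * f.choose k = N.choose k * (N - k).choose (f - k) :=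
      Nat.choose_mul (n := N) hkf
    -- (N - s)^k * f.descFactorial k ≤ f^k * N.descFactorial k
    have hnat : (N - s) ^ k * f.descFactorial k ≤ f ^ k * N.descFactorial k := by
      have h1 : (N - s) ^ k ≤ N.descFactorial k := by
        refine le_trans (Nat.pow_le_pow_left (Nat.sub_le_sub_left (Nat.sub_le s 1) N) k) ?_
        exact pow_le_descFactorial_aux k N
      have h2 : f.descFactorial k ≤ f ^ k := Nat.descFactorial_le_pow f k
      calc (N - s) ^ k * f.descFactorial k ≤ N.descFactorial k * f ^ k :=
            Nat.mul_le_mul h1 h2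
        _ = f ^ k * N.descFactorial k := Nat.mul_comm _ _
    -- convert to choose form
    have hnat' : (N - s) ^ k * f.choose k ≤ f ^ k * N.choose k := by
      have := hnat
      rw [Nat.descFactorial_eq_factorial_mul_choose f k,
        Nat.descFactorial_eq_factorial_mul_choose N k] at this
      have hfact : 0 < Nat.factorial k := Nat.factorial_pos k
      have h3 : Nat.factorial k * ((N - s) ^ k * f.choose k) ≤
          Nat.factorial k * (f ^ k * N.choose k) := by
        calc Nat.factorial k * ((N - s) ^ k * f.choose k)
            = (N - s) ^ k * (Nat.factorial k * f.choose k) := by ring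
          _ ≤ f ^ k * (Nat.factorial k * N.choose k) := this
          _ = Nat.factorial k * (f ^ k * N.choose k) := by ring
      exact Nat.le_of_mul_le_mul_left h3 hfact
    have hcast : ((N:ℝ) - s) = ((N - s : ℕ) : ℝ) := by
      rw [Nat.cast_sub hsN]
    rw [hcast]
    have hfkR : (0:ℝ) < (f:ℝ) ^ k := by positivity
    have hc4R : (0:ℝ) < (f.choose k : ℝ) := by exact_mod_cast hc4pos
    rw [div_le_div_iff₀ hfkR hc2posR]
    have hidentR : (N.choose f : ℝ) * (f.choose k : ℝ) =
        (N.choose k : ℝ) * ((N - k).choose (f - k) : ℝ) := by exact_mod_cast hident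
    have hnatR : ((N - s : ℕ) : ℝ) ^ k * (f.choose k : ℝ) ≤
        (f : ℝ) ^ k * (N.choose k : ℝ) := by exact_mod_cast hnat'
    -- goal: (N-s)^k * c2 ≤ choose N f * f^k
    -- from hnatR: (N-s)^k * c4 ≤ f^k * c3, multiply by c2/c4 using ident
    have h1 : ((N - s : ℕ) : ℝ) ^ k * ((N - k).choose (f - k) : ℝ) * (f.choose k : ℝ) ≤
        (N.choose f : ℝ) * (f : ℝ) ^ k * (f.choose k : ℝ) := by
      calc ((N - s : ℕ) : ℝ) ^ k * ((N - k).choose (f - k) : ℝ) * (f.choose k : ℝ)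
          = (((N - s : ℕ) : ℝ) ^ k * (f.choose k : ℝ)) * ((N - k).choose (f - k) : ℝ) := by ring
        _ ≤ ((f : ℝ) ^ k * (N.choose k : ℝ)) * ((N - k).choose (f - k) : ℝ) := by
            apply mul_le_mul_of_nonneg_right hnatR (by positivity)
        _ = (f : ℝ) ^ k * ((N.choose k : ℝ) * ((N - k).choose (f - k) : ℝ)) := by ring
        _ = (f : ℝ) ^ k * ((N.choose f : ℝ) * (f.choose k : ℝ)) := by rw [← hidentR]
        _ = (N.choose f : ℝ) * (f : ℝ) ^ k * (f.choose k : ℝ) := by ring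
    exact le_of_mul_le_mul_right h1 hc4R
end
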